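/- arXiv:math/9803110 — 4 statements merged into one kernel-verified Lean document; each statement's English description precedes it below -/
import Mathlib

section
/- (Quasicommutativity of z_n^m with (z_a^α)* for (a,α) ≠ (n,m)) For all b ≠ n one has (z_b^m)* z_n^m = q · z_n^m (z_b^m)*, and for all β ≠ m one has (z_n^β)* z_n^m = q · z_n^m (z_n^β)*. -/
noncomputable section

/-- The coefficient `R'` (and `R''`, which has the same form) from the
commutation relations of `Pol(Mat_{mn})_q`. -/
def Rcoef (q : ℝ) {n : ℕ} (b a b' a' : Fin n) : ℝ :=
  if a ≠ b ∧ b = b' ∧ a = a' then q⁻¹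
  else if a = b ∧ a = a' ∧ a = b' then 1
  else if a = b ∧ a' = b' ∧ a < a' then -(q⁻¹ ^ 2 - 1)
  else 0

lemma r_offdiag (q : ℝ) {n : ℕ} (b N b' a' : Fin n) (h : b ≠ N) :
    Rcoef q b N b' a' = if a' = N ∧ b' = b then q⁻¹ else 0 := by
  by_cases h1 : a' = N ∧ b' = b
  · obtain ⟨rfl, rfl⟩ := h1
    simp [Rcoef, Ne.symm h]
  · rw [if_neg h1]
    unfold Rcoef
    rw [if_neg, if_neg, if_neg]
    · rintro ⟨rfl, -, -⟩; exact h rfl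
    · rintro ⟨rfl, -, -⟩; exact h rfl
    · rintro ⟨-, rfl, rfl⟩; exact h1 ⟨rfl, rfl⟩

lemma r_diag (q : ℝ) {m : ℕ} (M α' β' : Fin m) (hM : ∀ x : Fin m, x ≤ M) :
    Rcoef q M M β' α' = if α' = M ∧ β' = M then 1 else 0 := by
  by_cases h1 : α' = M ∧ β' = M
  · obtain ⟨rfl, rfl⟩ := h1
    simp [Rcoef]
  · rw [if_neg h1]
    unfold Rcoef
    rw [if_neg, if_neg, if_neg]
    · rintro ⟨-, -, hlt⟩; exact absurd hlt (not_lt.mpr (hM _))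
    · rintro ⟨-, h2, h3⟩; exact h1 ⟨h2.symm, h3.symm⟩
    · rintro ⟨h2, -, -⟩; exact h2 rfl

/-- Quasicommutativity of `z_n^m` with `(z_a^α)*` for `(a,α) ≠ (n,m)`:
`(z_b^m)* z_n^m = q z_n^m (z_b^m)*` for `b ≠ n`, and
`(z_n^β)* z_n^m = q z_n^m (z_n^β)*` for `β ≠ m`. -/
theorem quasicommute {A : Type*} [Ring A] [Algebra ℂ A] [StarRing A]
    (q : ℝ) (hq0 : 0 < q) (hq1 : q < 1)
    (m n : ℕ) (hm : 0 < m) (hn : 0 < n)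
    (z : Fin n → Fin m → A)
    (hrel : ∀ (a b : Fin n) (α β : Fin m),
      star (z b β) * z a α =
        ((q ^ 2 : ℝ) : ℂ) • (∑ a' : Fin n, ∑ b' : Fin n, ∑ α' : Fin m, ∑ β' : Fin m,
            ((Rcoef q b a b' a' * Rcoef q β α β' α' : ℝ) : ℂ) •
              (z a' α' * star (z b' β')))
        + (if a = b ∧ α = β then ((1 - q ^ 2 : ℝ) : ℂ) • (1 : A) else 0))
 :
    (∀ b : Fin n, b ≠ ⟨n - 1, by omega⟩ →
      star (z b ⟨m - 1, by omega⟩) * z ⟨n - 1, by omega⟩ ⟨m - 1, by omega⟩ =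
        ((q : ℝ) : ℂ) • (z ⟨n - 1, by omega⟩ ⟨m - 1, by omega⟩ * star (z b ⟨m - 1, by omega⟩))) ∧
    (∀ β : Fin m, β ≠ ⟨m - 1, by omega⟩ →
      star (z ⟨n - 1, by omega⟩ β) * z ⟨n - 1, by omega⟩ ⟨m - 1, by omega⟩ =
        ((q : ℝ) : ℂ) • (z ⟨n - 1, by omega⟩ ⟨m - 1, by omega⟩ * star (z ⟨n - 1, by omega⟩ β))) := by
  have hq : q ≠ 0 := ne_of_gt hq0
  have hcast : ((q ^ 2 : ℝ) : ℂ) * ((q⁻¹ : ℝ) : ℂ) = ((q : ℝ) : ℂ) := by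
    rw [← Complex.ofReal_mul, pow_two, mul_assoc, mul_inv_cancel₀ hq, mul_one]
  have hMle : ∀ x : Fin m, x ≤ (⟨m - 1, by omega⟩ : Fin m) := by
    rintro ⟨x, hx⟩; exact Fin.mk_le_mk.mpr (by omega)
  have hNle : ∀ x : Fin n, x ≤ (⟨n - 1, by omega⟩ : Fin n) := by
    rintro ⟨x, hx⟩; exact Fin.mk_le_mk.mpr (by omega)
  constructor
  · intro b hb
    rw [hrel ⟨n - 1, by omega⟩ b ⟨m - 1, by omega⟩ ⟨m - 1, by omega⟩]
    have hr1 : ∀ b' a' : Fin n, Rcoef q b ⟨n - 1, by omega⟩ b' a' =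
        if a' = ⟨n - 1, by omega⟩ ∧ b' = b then q⁻¹ else 0 :=
      fun b' a' => r_offdiag q b _ b' a' hb
    have hr2 : ∀ β' α' : Fin m, Rcoef q ⟨m - 1, by omega⟩ ⟨m - 1, by omega⟩ β' α' =
        if α' = ⟨m - 1, by omega⟩ ∧ β' = ⟨m - 1, by omega⟩ then 1 else 0 :=
      fun β' α' => r_diag q _ α' β' hMle
    rw [if_neg (by rintro ⟨h1, -⟩; exact hb h1.symm), add_zero]
    simp only [hr1, hr2, ite_and, mul_ite, ite_mul, zero_mul, mul_zero, mul_one,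
      Complex.ofReal_zero, apply_ite (Complex.ofReal), ite_smul, zero_smul,
      Finset.sum_ite_irrel, Finset.sum_ite_eq', Finset.mem_univ, if_true,
      Finset.sum_const_zero]
    rw [smul_smul, hcast]
  · intro β hβ
    rw [hrel ⟨n - 1, by omega⟩ ⟨n - 1, by omega⟩ ⟨m - 1, by omega⟩ β]
    have hr1 : ∀ b' a' : Fin n, Rcoef q ⟨n - 1, by omega⟩ ⟨n - 1, by omega⟩ b' a' =
        if a' = ⟨n - 1, by omega⟩ ∧ b' = ⟨n - 1, by omega⟩ then 1 else 0 :=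
      fun b' a' => r_diag q _ a' b' hNle
    have hr2 : ∀ β' α' : Fin m, Rcoef q β ⟨m - 1, by omega⟩ β' α' =
        if α' = ⟨m - 1, by omega⟩ ∧ β' = β then q⁻¹ else 0 :=
      fun β' α' => r_offdiag q β _ β' α' hβ
    rw [if_neg (by rintro ⟨-, h1⟩; exact hβ h1.symm), add_zero]
    simp only [hr1, hr2, ite_and, mul_ite, ite_mul, zero_mul, mul_zero, mul_one, one_mul,
      Complex.ofReal_zero, apply_ite (Complex.ofReal), ite_smul, zero_smul,
      Finset.sum_ite_irrel, Finset.sum_ite_eq', Finset.mem_univ, if_true,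
      Finset.sum_const_zero]
    rw [smul_smul, hcast]
end
end

section
/- For all j, k ∈ ℕ one has f₀ (z*)^j z^k f₀ = δ_{jk} · (∏_{i=1}^{k} (1 − q^{2i})) · f₀, where δ_{jk} is the Kronecker symbol. (This is the orthogonality of the vectors z^k f₀ in ℋ and the positivity of their squared lengths ∏_{i=1}^{k}(1 − q^{2i}), which underlies the positive definiteness of the scalar product on ℋ with (f₀, f₀) = 1 and (T_f ψ₁, ψ₂) = (ψ₁, T_{f*} ψ₂).) -/
/-! Moving `y` through a power of `x` by the relation `y x = c x y + (1 - c)` gives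
`y x^(k+1) = c^(k+1) x^(k+1) y + (1 - c^(k+1)) x^k`. Between two copies of an idempotent `p` with
`y p = 0` and `p x = 0` the first summand dies, so `p y^(j+1) x^(k+1) p` is
`(1 - c^(k+1)) p y^j x^k p`; unwinding reaches `p x^m p = 0`, `p y^m p = 0` (`m > 0`) or `p p = p`. -/

open Finset

section QCommutation

variable {R A : Type*} [CommRing R] [Ring A] [Algebra R A] {c : R} {x y : A}

theorem mul_pow_succ_of_mul_eq_smul_add (hyx : y * x = c • (x * y) + (1 - c) • 1) (k : ℕ) :
    y * x ^ (k + 1) = c ^ (k + 1) • (x ^ (k + 1) * y) + (1 - c ^ (k + 1)) • x ^ k := by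
  induction k with
  | zero => simpa using hyx
  | succ k ih =>
    calc y * x ^ (k + 1 + 1) = (y * x ^ (k + 1)) * x := by rw [pow_succ, mul_assoc]
      _ = c ^ (k + 1) • (x ^ (k + 1) * (y * x)) + (1 - c ^ (k + 1)) • x ^ (k + 1) := by
        rw [ih, add_mul, smul_mul_assoc, smul_mul_assoc, mul_assoc, ← pow_succ]
      _ = c ^ (k + 1 + 1) • (x ^ (k + 1 + 1) * y) + (1 - c ^ (k + 1 + 1)) • x ^ (k + 1) := by
        rw [hyx, mul_add, mul_smul_comm, mul_smul_comm, mul_one, ← mul_assoc, ← pow_succ]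
        module

variable {p : A}

theorem mul_pow_succ_mul_pow_succ_mul (hyx : y * x = c • (x * y) + (1 - c) • 1) (hyp : y * p = 0)
    (j k : ℕ) :
    p * (y ^ (j + 1) * x ^ (k + 1)) * p = (1 - c ^ (k + 1)) • (p * (y ^ j * x ^ k) * p) := by
  have hvanish : p * (y ^ j * (x ^ (k + 1) * y)) * p = 0 := by
    simp only [mul_assoc, hyp, mul_zero]
  rw [pow_succ, mul_assoc (y ^ j), mul_pow_succ_of_mul_eq_smul_add hyx]
  simp only [mul_add, add_mul, mul_smul_comm, smul_mul_assoc, hvanish, smul_zero, zero_add]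

theorem mul_pow_mul_pow_mul_of_isIdempotentElem (hyx : y * x = c • (x * y) + (1 - c) • 1)
    (hp : IsIdempotentElem p) (hyp : y * p = 0) (hpx : p * x = 0) (j k : ℕ) :
    p * (y ^ j * x ^ k) * p = if j = k then (∏ i ∈ Icc 1 k, (1 - c ^ i)) • p else 0 := by
  induction j generalizing k with
  | zero =>
    cases k with
    | zero => simpa using hp.eq
    | succ k => simp [pow_succ', ← mul_assoc, hpx]
  | succ j ih =>
    cases k with
    | zero => simp [pow_succ, mul_assoc, hyp]
    | succ k =>
      rw [mul_pow_succ_mul_pow_succ_mul hyx hyp, ih, prod_Icc_succ_top (Nat.le_add_left 1 k)]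
      split_ifs <;> first | omega | simp [smul_smul, mul_comm]

end QCommutation

theorem f0_zstar_pow_z_pow_f0_general {A : Type*} [Ring A] [Algebra ℂ A] [StarRing A]
    (q : ℝ) (z f₀ : A)
    (hz : star z * z = ((q ^ 2 : ℝ) : ℂ) • (z * star z) + ((1 - q ^ 2 : ℝ) : ℂ) • (1 : A))
    (hf₀sq : f₀ * f₀ = f₀)
    (hstarf₀ : star z * f₀ = 0) (hf₀z : f₀ * z = 0) :
    ∀ j k : ℕ,
      f₀ * ((star z) ^ j * z ^ k) * f₀ =
        if j = k then ((∏ i ∈ Finset.Icc 1 k, (1 - q ^ (2 * i)) : ℝ) : ℂ) • f₀ else 0 := by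
  intro j k
  rw [Complex.ofReal_sub, Complex.ofReal_one] at hz
  rw [mul_pow_mul_pow_mul_of_isIdempotentElem hz hf₀sq hstarf₀ hf₀z]
  push_cast
  simp only [pow_mul]

/-- Orthogonality of the vectors `z^k f₀` and positivity of their squared lengths:
`f₀ (z*)^j z^k f₀ = δ_{jk} (∏_{i=1}^{k} (1 - q^{2i})) f₀`. -/
theorem f0_zstar_pow_z_pow_f0 {A : Type*} [Ring A] [Algebra ℂ A] [StarRing A]
    (q : ℝ) (hq0 : 0 < q) (hq1 : q < 1) (z f₀ : A)
    (hz : star z * z = ((q ^ 2 : ℝ) : ℂ) • (z * star z) + ((1 - q ^ 2 : ℝ) : ℂ) • (1 : A))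
    (hf₀sq : f₀ * f₀ = f₀) (hf₀star : star f₀ = f₀)
    (hstarf₀ : star z * f₀ = 0) (hf₀z : f₀ * z = 0) :
    ∀ j k : ℕ,
      f₀ * ((star z) ^ j * z ^ k) * f₀ =
        if j = k then ((∏ i ∈ Finset.Icc 1 k, (1 - q ^ (2 * i)) : ℝ) : ℂ) • f₀ else 0 :=
  f0_zstar_pow_z_pow_f0_general q z f₀ hz hf₀sq hstarf₀ hf₀z
end

section
/- For every element w of the unital subalgebra of A generated by z and z*, there exists a scalar c ∈ ℂ such that f₀ w f₀ = c · f₀. (The two-sided compression by the q-delta-function f₀ of any polynomial in z, z* is a scalar multiple of f₀; this is what makes the functional f ↦ (T_f f₀, f₀) well defined on the algebra of finite functions.) -/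
/-- The compression by the `q`-delta-function `f₀` of any polynomial in `z, z*`
is a scalar multiple of `f₀`. -/
theorem f0_compression_scalar {A : Type*} [Ring A] [Algebra ℂ A] [StarRing A]
    (q : ℝ) (hq0 : 0 < q) (hq1 : q < 1) (z f₀ : A)
    (hz : star z * z = ((q ^ 2 : ℝ) : ℂ) • (z * star z) + ((1 - q ^ 2 : ℝ) : ℂ) • (1 : A))
    (hf₀sq : f₀ * f₀ = f₀) (hf₀star : star f₀ = f₀)
    (hstarf₀ : star z * f₀ = 0) (hf₀z : f₀ * z = 0) :
    ∀ w ∈ Algebra.adjoin ℂ ({z, star z} : Set A), ∃ c : ℂ, f₀ * w * f₀ = c • f₀ := by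
  set S : Submodule ℂ A :=
    Submodule.span ℂ (Set.range fun p : ℕ × ℕ => z ^ p.1 * star z ^ p.2) with hSdef
  have hmono : ∀ a b : ℕ, z ^ a * star z ^ b ∈ S := fun a b =>
    Submodule.subset_span ⟨(a, b), rfl⟩
  have mulL : ∀ s ∈ S, z * s ∈ S := by
    intro s hs
    induction hs using Submodule.span_induction with
    | mem x hx =>
        obtain ⟨⟨a, b⟩, rfl⟩ := hx
        simpa [pow_succ', mul_assoc] using hmono (a + 1) b
    | zero => simpa using S.zero_mem
    | add x y _ _ hx hy => simpa [mul_add] using S.add_mem hx hy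
    | smul c x _ hx => simpa [mul_smul_comm] using S.smul_mem c hx
  have mulR : ∀ s ∈ S, s * star z ∈ S := by
    intro s hs
    induction hs using Submodule.span_induction with
    | mem x hx =>
        obtain ⟨⟨a, b⟩, rfl⟩ := hx
        simpa [pow_succ, mul_assoc] using hmono a (b + 1)
    | zero => simpa using S.zero_mem
    | add x y _ _ hx hy => simpa [add_mul] using S.add_mem hx hy
    | smul c x _ hx => simpa [smul_mul_assoc] using S.smul_mem c hx
  have stz : ∀ a : ℕ, star z * z ^ a ∈ S := by
    intro a
    induction a with
    | zero => simpa using hmono 0 1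
    | succ a ih =>
        have h1 : star z * z ^ (a + 1)
            = ((q ^ 2 : ℝ) : ℂ) • (z * (star z * z ^ a))
              + ((1 - q ^ 2 : ℝ) : ℂ) • z ^ a := by
          rw [pow_succ', ← mul_assoc, hz]
          simp [add_mul, smul_mul_assoc, mul_assoc]
        rw [h1]
        exact S.add_mem (S.smul_mem _ (mulL _ ih))
          (S.smul_mem _ (by simpa using hmono a 0))
  have mulLs : ∀ s ∈ S, star z * s ∈ S := by
    intro s hs
    induction hs using Submodule.span_induction with
    | mem x hx =>
        obtain ⟨⟨a, b⟩, rfl⟩ := hx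
        rw [← mul_assoc]
        induction b with
        | zero => simpa using stz a
        | succ b ihb =>
            rw [pow_succ, ← mul_assoc]
            exact mulR _ ihb
    | zero => simpa using S.zero_mem
    | add x y _ _ hx hy => simpa [mul_add] using S.add_mem hx hy
    | smul c x _ hx => simpa [mul_smul_comm] using S.smul_mem c hx
  have mulLpow : ∀ (a : ℕ) (s : A), s ∈ S → z ^ a * s ∈ S := by
    intro a
    induction a with
    | zero => intro s hs; simpa using hs
    | succ a ih =>
        intro s hs
        rw [pow_succ, mul_assoc]
        exact ih _ (mulL _ hs)
  have mulLspow : ∀ (b : ℕ) (s : A), s ∈ S → star z ^ b * s ∈ S := by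
    intro b
    induction b with
    | zero => intro s hs; simpa using hs
    | succ b ih =>
        intro s hs
        rw [pow_succ, mul_assoc]
        exact ih _ (mulLs _ hs)
  have hmul : ∀ x ∈ S, ∀ y ∈ S, x * y ∈ S := by
    intro x hx y hy
    induction hx using Submodule.span_induction with
    | mem u hu =>
        obtain ⟨⟨a, b⟩, rfl⟩ := hu
        rw [mul_assoc]
        exact mulLpow a _ (mulLspow b _ hy)
    | zero => simpa using S.zero_mem
    | add u v _ _ hu hv => simpa [add_mul] using S.add_mem hu hv
    | smul c u _ hu => simpa [smul_mul_assoc] using S.smul_mem c hu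
  have hadj : ∀ w ∈ Algebra.adjoin ℂ ({z, star z} : Set A), w ∈ S := by
    intro w hw
    induction hw using Algebra.adjoin_induction with
    | mem x hx =>
        rcases hx with h | h
        · subst h; simpa using hmono 1 0
        · rw [Set.mem_singleton_iff] at h; subst h; simpa using hmono 0 1
    | algebraMap c =>
        have : algebraMap ℂ A c = c • (1 : A) := by
          simp [Algebra.algebraMap_eq_smul_one]
        rw [this]
        exact S.smul_mem c (by simpa using hmono 0 0)
    | add x y _ _ hx hy => exact S.add_mem hx hy
    | mul x y _ _ hx hy => exact hmul _ hx _ hy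
  intro w hw
  have hwS : w ∈ S := hadj w hw
  clear hw
  induction hwS using Submodule.span_induction with
  | mem x hx =>
      obtain ⟨⟨a, b⟩, rfl⟩ := hx
      dsimp only
      cases a with
      | zero =>
          cases b with
          | zero => exact ⟨1, by simpa using hf₀sq⟩
          | succ b =>
              refine ⟨0, ?_⟩
              have : star z ^ (b + 1) * f₀ = 0 := by
                rw [pow_succ, mul_assoc, hstarf₀, mul_zero]
              simp [mul_assoc, this]
      | succ a =>
          refine ⟨0, ?_⟩
          have h0 : f₀ * z ^ (a + 1) = 0 := by
            rw [pow_succ', ← mul_assoc, hf₀z, zero_mul]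
          rw [← mul_assoc, h0]
          simp
  | zero => exact ⟨0, by simp⟩
  | add x y _ _ hx hy =>
      obtain ⟨c1, h1⟩ := hx
      obtain ⟨c2, h2⟩ := hy
      exact ⟨c1 + c2, by rw [mul_add, add_mul, h1, h2, add_smul]⟩
  | smul c x _ hx =>
      obtain ⟨c1, h1⟩ := hx
      exact ⟨c * c1, by rw [mul_smul_comm, smul_mul_assoc, h1, smul_smul]⟩
end

section
/- Let ⟨·,·⟩ be the sesquilinear form on H determined by ⟨e_j, e_k⟩ = δ_{jk} · ∏_{i=1}^{k} (1 − q^{2i}). Then (i) ⟨W x, y⟩ = ⟨x, Z y⟩ for all x, y ∈ H, i.e. W is adjoint to Z, and (ii) ⟨x, x⟩ > 0 for every x ∈ H with x ≠ 0. (This is the scalar product on ℋ of section 5 in the quantum disc case: it satisfies (f₀, f₀) = 1 and (T_f ψ₁, ψ₂) = (ψ₁, T_{f*} ψ₂), and (ψ, ψ) > 0 for all ψ ≠ 0.) -/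
/-!
Packaged as a sesquilinear form, `⟨·,·⟩` is diagonal in the basis `e_k` with weights
`w_k = ∏_{i=1}^k (1 - q^{2i}) > 0`, so `⟨x, x⟩ = ∑ |x_k|² w_k > 0` for `x ≠ 0`. Adjointness
only has to be checked on basis vectors, where it is the recursion
`⟨W e_{k+1}, e_k⟩ = (1 - q^{2(k+1)}) w_k = w_{k+1} = ⟨e_{k+1}, Z e_k⟩`.
-/

open Finsupp

section DiagonalForm

variable {ι 𝕜 : Type*} [RCLike 𝕜] [DecidableEq ι]

theorem apply_eq_sum_of_apply_single_single (B : (ι →₀ 𝕜) →ₗ⋆[𝕜] (ι →₀ 𝕜) →ₗ[𝕜] 𝕜)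
    (w : ι → 𝕜) (hB : ∀ j k, B (single j 1) (single k 1) = if j = k then w k else 0)
    (x y : ι →₀ 𝕜) : B x y = x.sum fun k a => starRingEnd 𝕜 a * y k * w k := by
  rw [← LinearMap.sum_repr_mul_repr_mulₛₗ Finsupp.basisSingleOne Finsupp.basisSingleOne x y]
  simp only [coe_basisSingleOne, Finsupp.basisSingleOne_repr, LinearEquiv.refl_apply, hB,
    smul_eq_mul, RingHom.id_apply, mul_ite, mul_zero]
  refine sum_congr fun k _ => ?_
  rw [sum_ite_eq]
  split_ifs with hk
  · ring
  · simp [notMem_support_iff.mp hk]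

theorem exists_pos_apply_self_of_apply_single_single
    (B : (ι →₀ 𝕜) →ₗ⋆[𝕜] (ι →₀ 𝕜) →ₗ[𝕜] 𝕜) (c : ι → ℝ) (hc : ∀ k, 0 < c k)
    (hB : ∀ j k, B (single j 1) (single k 1) = if j = k then (c k : 𝕜) else 0)
    {x : ι →₀ 𝕜} (hx : x ≠ 0) : ∃ r : ℝ, 0 < r ∧ B x x = r := by
  refine ⟨∑ k ∈ x.support, ‖x k‖ ^ 2 * c k, ?_, ?_⟩
  · refine Finset.sum_pos (fun k hk => mul_pos ?_ (hc k)) (support_nonempty_iff.mpr hx)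
    exact pow_pos (norm_pos_iff.mpr (mem_support_iff.mp hk)) 2
  · rw [apply_eq_sum_of_apply_single_single B _ hB, Finsupp.sum]
    push_cast
    refine Finset.sum_congr rfl fun k _ => ?_
    rw [RCLike.conj_mul]

end DiagonalForm

def discWeight (q : ℝ) (k : ℕ) : ℝ := ∏ i ∈ Finset.Icc 1 k, (1 - q ^ (2 * i))

section DiscWeight

variable {q : ℝ}

theorem discWeight_pos (hq : |q| < 1) (k : ℕ) : 0 < discWeight q k := by
  refine Finset.prod_pos fun i hi => sub_pos.mpr ?_
  rw [← (even_two_mul i).pow_abs]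
  exact pow_lt_one₀ (abs_nonneg q) hq (by grind)

theorem discWeight_succ (k : ℕ) :
    discWeight q (k + 1) = discWeight q k * (1 - q ^ (2 * (k + 1))) :=
  Finset.prod_Icc_succ_top (by omega) _

end DiscWeight

/-- Let `⟨·,·⟩` be the sesquilinear form on `H = ℕ →₀ ℂ` (conjugate-linear in the
first argument) determined by `⟨e_j, e_k⟩ = δ_{jk} ∏_{i=1}^{k} (1 - q^{2i})`.
Then (i) `⟨W x, y⟩ = ⟨x, Z y⟩` for all `x, y`, i.e. `W` is adjoint to `Z`,
and (ii) `⟨x, x⟩ > 0` for every `x ≠ 0`. -/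
theorem scalar_product_adjoint_and_positive (q : ℝ) (hq0 : 0 < q) (hq1 : q < 1)
    (Z W : (ℕ →₀ ℂ) →ₗ[ℂ] (ℕ →₀ ℂ))
    (hZ : ∀ k : ℕ, Z (Finsupp.single k 1) = Finsupp.single (k + 1) 1)
    (hW0 : W (Finsupp.single 0 1) = 0)
    (hW : ∀ k : ℕ, 1 ≤ k →
      W (Finsupp.single k 1) = ((1 - q ^ (2 * k) : ℝ) : ℂ) • Finsupp.single (k - 1) 1)
    (B : (ℕ →₀ ℂ) → (ℕ →₀ ℂ) → ℂ)
    (hBaddl : ∀ x₁ x₂ y, B (x₁ + x₂) y = B x₁ y + B x₂ y)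
    (hBaddr : ∀ x y₁ y₂, B x (y₁ + y₂) = B x y₁ + B x y₂)
    (hBsmull : ∀ (c : ℂ) x y, B (c • x) y = (starRingEnd ℂ) c * B x y)
    (hBsmulr : ∀ (c : ℂ) x y, B x (c • y) = c * B x y)
    (hBe : ∀ j k : ℕ, B (Finsupp.single j 1) (Finsupp.single k 1) =
      if j = k then ((∏ i ∈ Finset.Icc 1 k, (1 - q ^ (2 * i)) : ℝ) : ℂ) else 0) :
    (∀ x y, B (W x) y = B x (Z y)) ∧
    (∀ x : ℕ →₀ ℂ, x ≠ 0 → ∃ r : ℝ, 0 < r ∧ B x x = (r : ℂ)) := by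
  let Bₗ : (ℕ →₀ ℂ) →ₗ⋆[ℂ] (ℕ →₀ ℂ) →ₗ[ℂ] ℂ :=
    LinearMap.mk₂'ₛₗ _ _ B hBaddl hBsmull hBaddr hBsmulr
  have hBₗ : ∀ j k, Bₗ (single j 1) (single k 1) = if j = k then (discWeight q k : ℂ) else 0 :=
    hBe
  have hq : |q| < 1 := abs_lt.mpr ⟨by linarith, hq1⟩
  refine ⟨fun x y => ?_, fun x hx =>
    exists_pos_apply_self_of_apply_single_single Bₗ _ (discWeight_pos hq) hBₗ hx⟩
  suffices h : Bₗ.comp W = Bₗ.compl₂ Z by exact LinearMap.congr_fun₂ h x y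
  refine LinearMap.ext_basis Finsupp.basisSingleOne Finsupp.basisSingleOne fun j k => ?_
  simp only [coe_basisSingleOne, LinearMap.comp_apply, LinearMap.compl₂_apply, hZ]
  rcases j with _ | j
  · simp [hW0, hBₗ]
  · rw [hW (j + 1) j.succ_pos, Nat.add_sub_cancel, map_smulₛₗ, LinearMap.smul_apply, hBₗ, hBₗ]
    simp only [add_left_inj]
    split_ifs with hjk
    · subst hjk
      rw [Complex.conj_ofReal, smul_eq_mul, discWeight_succ, Complex.ofReal_mul, mul_comm]
    · simp
end
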